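/- arXiv:gr-qc/0402058 — 2 statements merged into one kernel-verified Lean document; each statement's English description precedes it below -/
import Mathlib

section
/- The map s_θ : ℝ³ → ℝ³ defined by s_θ(x,y,z) = (x cosθ − y sinθ, x sinθ + y cosθ, z + ζ_θ(x,y)), where ζ_θ(x,y) = (1/2)((x²−y²)cosθ − 2xy sinθ) sinθ, satisfies the one-parameter group law s_θ ∘ s_φ = s_{θ+φ} for all θ, φ ∈ ℝ. -/
noncomputable def zetaMap (θ x y : ℝ) : ℝ :=
  (1 / 2) * ((x ^ 2 - y ^ 2) * Real.cos θ - 2 * x * y * Real.sin θ) * Real.sin θ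

noncomputable def sMap (θ : ℝ) (p : ℝ × ℝ × ℝ) : ℝ × ℝ × ℝ :=
  (p.1 * Real.cos θ - p.2.1 * Real.sin θ,
   p.1 * Real.sin θ + p.2.1 * Real.cos θ,
   p.2.2 + zetaMap θ p.1 p.2.1)

theorem sMap_one_parameter_group (θ φ : ℝ) (p : ℝ × ℝ × ℝ) :
    sMap θ (sMap φ p) = sMap (θ + φ) p := by
  have hφ := Real.sin_sq_add_cos_sq φ
  have hθ := Real.sin_sq_add_cos_sq θ
  simp only [sMap, zetaMap, Real.cos_add, Real.sin_add, Prod.mk.injEq]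
  refine ⟨by ring, by ring, ?_⟩
  linear_combination
    (p.1 * p.2.1 * (Real.sin θ ^ 2 + Real.cos θ ^ 2 - 1)) * hφ +
    ((1/2) * p.2.1 ^ 2 * Real.cos φ * Real.sin φ + p.1 * p.2.1
      - p.1 * p.2.1 * Real.cos φ ^ 2
      - (1/2) * p.1 ^ 2 * Real.cos φ * Real.sin φ) * hθ
end

section
/- Let u ≠ 0, v ≠ 0, δ ∈ ℝ, and k₁, k₂ ∈ ℤ. The function φ(x,y,z) = exp( (i/u)(2πk₁ x + (k₂/v)(−δx + uy)) ) on ℝ³ is invariant under the three Heisenberg left translations by a₁ = (u,δ,0), a₂ = (0,2πv,0), a₃ = (0,0,2πuv), i.e. φ(a_j·(x,y,z)) = φ(x,y,z) for j = 1,2,3, where (a,b,c)·(x,y,z) = (a+x, b+y, c+z+ay). Moreover it satisfies χ₁φ = i(1/u)(2πk₁ − (δ/v)k₂)φ, χ₂φ = i(k₂/v)φ, χ₃φ = 0. -/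
/-!
`φ` is the plane wave `exp (A x + B y)` with `A = i (2π k₁ - δ k₂ / v) / u` and `B = i k₂ / v`.
A Heisenberg translation by `(a, b, c)` shifts `x` by `a` and `y` by `b` only, so it multiplies a
plane wave by `exp (A a + B b)`; for `a₁, a₂, a₃` this exponent is `2πi k₁`, `2πi k₂` and `0`.
The left-invariant fields `χ₁, χ₂, χ₃` act on a plane wave by the constants `A`, `B` and `0`.
-/

noncomputable def chi1 (f : ℝ × ℝ × ℝ → ℂ) (p : ℝ × ℝ × ℝ) : ℂ :=
  fderiv ℝ f p (1, 0, 0)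

noncomputable def chi2 (f : ℝ × ℝ × ℝ → ℂ) (p : ℝ × ℝ × ℝ) : ℂ :=
  fderiv ℝ f p (0, 1, 0) + p.1 * fderiv ℝ f p (0, 0, 1)

noncomputable def chi3 (f : ℝ × ℝ × ℝ → ℂ) (p : ℝ × ℝ × ℝ) : ℂ :=
  fderiv ℝ f p (0, 0, 1)

/-- Heisenberg left action (a,b,c)·(x,y,z) = (a+x, b+y, c+z+ay). -/
def heisAct (a b c : ℝ) (p : ℝ × ℝ × ℝ) : ℝ × ℝ × ℝ :=
  (a + p.1, b + p.2.1, c + p.2.2 + a * p.2.1)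

noncomputable def linearPhase (A B : ℂ) : (ℝ × ℝ × ℝ) →L[ℝ] ℂ :=
  A • Complex.ofRealCLM.comp (ContinuousLinearMap.fst ℝ ℝ (ℝ × ℝ)) +
    B • Complex.ofRealCLM.comp
      ((ContinuousLinearMap.fst ℝ ℝ ℝ).comp (ContinuousLinearMap.snd ℝ ℝ (ℝ × ℝ)))

@[simp]
lemma linearPhase_apply (A B : ℂ) (q : ℝ × ℝ × ℝ) : linearPhase A B q = A * q.1 + B * q.2.1 := by
  simp [linearPhase]

noncomputable def planeWave (A B : ℂ) (q : ℝ × ℝ × ℝ) : ℂ :=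
  Complex.exp (linearPhase A B q)

lemma planeWave_heisAct (A B : ℂ) (a b c : ℝ) (p : ℝ × ℝ × ℝ) :
    planeWave A B (heisAct a b c p) = Complex.exp (A * a + B * b) * planeWave A B p := by
  simp only [planeWave, linearPhase_apply, heisAct, ← Complex.exp_add]
  push_cast
  ring_nf

lemma fderiv_planeWave (A B : ℂ) (p : ℝ × ℝ × ℝ) :
    fderiv ℝ (planeWave A B) p = planeWave A B p • linearPhase A B :=
  ((linearPhase A B).hasFDerivAt.cexp).fderiv

lemma chi1_planeWave (A B : ℂ) (p : ℝ × ℝ × ℝ) : chi1 (planeWave A B) p = A * planeWave A B p := by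
  simp [chi1, fderiv_planeWave, mul_comm]

lemma chi2_planeWave (A B : ℂ) (p : ℝ × ℝ × ℝ) : chi2 (planeWave A B) p = B * planeWave A B p := by
  simp [chi2, fderiv_planeWave, mul_comm]

lemma chi3_planeWave (A B : ℂ) (p : ℝ × ℝ × ℝ) : chi3 (planeWave A B) p = 0 := by
  simp [chi3, fderiv_planeWave]

theorem U1_symmetric_modes (u v δ : ℝ) (hu : u ≠ 0) (hv : v ≠ 0) (k1 k2 : ℤ) :
    let φ : ℝ × ℝ × ℝ → ℂ := fun p =>
      Complex.exp ((Complex.I / (u : ℂ)) *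
        (2 * Real.pi * k1 * p.1 + ((k2 : ℂ) / (v : ℂ)) * (-(δ : ℂ) * p.1 + (u : ℂ) * p.2.1)))
    (∀ p, φ (heisAct u δ 0 p) = φ p) ∧
    (∀ p, φ (heisAct 0 (2 * Real.pi * v) 0 p) = φ p) ∧
    (∀ p, φ (heisAct 0 0 (2 * Real.pi * (u * v)) p) = φ p) ∧
    (∀ p, chi1 φ p = Complex.I * ((1 / u : ℝ) : ℂ) *
        ((2 * Real.pi * k1 : ℂ) - ((δ / v : ℝ) : ℂ) * k2) * φ p) ∧
    (∀ p, chi2 φ p = Complex.I * ((k2 : ℂ) / (v : ℂ)) * φ p) ∧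
    (∀ p, chi3 φ p = 0) := by
  intro φ
  have hu : (u : ℂ) ≠ 0 := Complex.ofReal_ne_zero.mpr hu
  have hv : (v : ℂ) ≠ 0 := Complex.ofReal_ne_zero.mpr hv
  set A : ℂ := Complex.I * ((1 / u : ℝ) : ℂ) * (2 * Real.pi * k1 - ((δ / v : ℝ) : ℂ) * k2)
  set B : ℂ := Complex.I * (k2 / v)
  have hφ : φ = planeWave A B := by
    ext p
    simp only [φ, planeWave, linearPhase_apply, A, B]
    congr 1
    push_cast
    field_simp
    ring
  have h_a₁ : A * u + B * δ = k1 * (2 * Real.pi * Complex.I) := by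
    simp only [A, B]; push_cast; field_simp; ring
  have h_a₂ : A * (0 : ℝ) + B * (2 * Real.pi * v : ℝ) = k2 * (2 * Real.pi * Complex.I) := by
    simp only [B]; push_cast; field_simp; ring
  rw [hφ]
  refine ⟨fun p => ?_, fun p => ?_, fun p => ?_, chi1_planeWave A B, chi2_planeWave A B,
    chi3_planeWave A B⟩
  · rw [planeWave_heisAct, h_a₁, Complex.exp_int_mul_two_pi_mul_I, one_mul]
  · rw [planeWave_heisAct, h_a₂, Complex.exp_int_mul_two_pi_mul_I, one_mul]
  · simp [planeWave_heisAct]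
end
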